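/- Let M be a σ-finite von Neumann algebra with faithful normal state φ, and ω a nonprincipal ultrafilter on ℕ. Suppose (u_n) is a sequence of unitaries in M satisfying ‖u_nφ − φu_n‖ → 0 and ‖xu_n − u_nx‖_φ → 0 for all x ∈ M. Then (u_n) belongs to the multiplier algebra 𝓜^ω(M), the element u = (u_n)^ω lies in M' ∩ (M^ω)^{φ^ω} (the relative commutant intersected with the centralizer of the ultraproduct state), and u is a unitary in M^ω. -/

import Mathlib

open Filter

section

variable {M : Type*} [NormedRing M] [StarRing M] [CStarRing M] [CompleteSpace M]
  [NormedAlgebra ℂ M] [StarModule ℂ M]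

/-- A sequence in `M` is bounded. -/
def BddSeq (x : ℕ → M) : Prop := ∃ K : ℝ, ∀ n, ‖x n‖ ≤ K

/-- The ideal `𝓘_ω(M)` of bounded sequences converging to `0` *-strongly along `ω`. -/
def InIω (φ : M →ₗ[ℂ] ℂ) (ω : Ultrafilter ℕ) (x : ℕ → M) : Prop :=
  BddSeq x ∧ Tendsto (fun n => φ (star (x n) * x n)) (ω : Filter ℕ) (nhds 0) ∧
    Tendsto (fun n => φ (x n * star (x n))) (ω : Filter ℕ) (nhds 0)

/-- The multiplier algebra `𝓜^ω(M)` of `𝓘_ω(M)` inside `ℓ^∞(M)`. -/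
def InMω (φ : M →ₗ[ℂ] ℂ) (ω : Ultrafilter ℕ) (x : ℕ → M) : Prop :=
  BddSeq x ∧ ∀ y : ℕ → M, InIω φ ω y →
    InIω φ ω (fun n => x n * y n) ∧ InIω φ ω (fun n => y n * x n)

/-- The `L²`-seminorm `‖x‖_φ = φ(x* x)^{1/2}`. -/
noncomputable def phiNorm (φ : M →ₗ[ℂ] ℂ) (x : M) : ℝ :=
  Real.sqrt ((φ (star x * x)).re)

/-- A positive linear functional with `φ 1 = 1` on a unital C⋆-algebra is bounded, with
`‖φ w‖ ≤ 2 * ‖w‖`. -/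
lemma phi_bound (φ : M →ₗ[ℂ] ℂ) (hφ1 : φ 1 = 1)
    (hφpos : ∀ x : M, 0 ≤ (φ (star x * x)).re ∧ (φ (star x * x)).im = 0) :
    ∀ w : M, ‖φ w‖ ≤ 2 * ‖w‖ := by
  letI : CStarAlgebra M := { }
  letI : PartialOrder M := CStarAlgebra.spectralOrder M
  letI : StarOrderedRing M := CStarAlgebra.spectralOrderedRing M
  have hmono : ∀ p : M, 0 ≤ p → 0 ≤ (φ p).re ∧ (φ p).im = 0 := by
    intro p hp
    rw [StarOrderedRing.nonneg_iff] at hp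
    induction hp using AddSubmonoid.closure_induction with
    | mem x hx => obtain ⟨s, rfl⟩ := hx; exact hφpos s
    | zero => simp
    | add x y _ _ hx hy =>
        exact ⟨by rw [map_add, Complex.add_re]; exact add_nonneg hx.1 hy.1,
          by rw [map_add, Complex.add_im, hx.2, hy.2, add_zero]⟩
  have halg : ∀ r : ℝ, φ (algebraMap ℝ M r) = r := by
    intro r
    rw [Algebra.algebraMap_eq_smul_one]
    have : (r : ℝ) • (1 : M) = (r : ℂ) • (1 : M) := (Complex.coe_smul r (1:M)).symm
    rw [this, map_smul, hφ1, smul_eq_mul, mul_one]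
  have hsa : ∀ a : M, IsSelfAdjoint a → ‖φ a‖ ≤ ‖a‖ := by
    intro a ha
    have h₁ := hmono _ (sub_nonneg.mpr (ha.le_algebraMap_norm_self))
    have h₂ := hmono _ (sub_nonneg.mpr (ha.neg_algebraMap_norm_le_self))
    rw [map_sub, halg] at h₁
    rw [map_sub, map_neg, halg] at h₂
    have him : (φ a).im = 0 := by
      have := h₁.2
      simpa using this
    have hre₁ : (φ a).re ≤ ‖a‖ := by
      have := h₁.1; simp at this; linarith
    have hre₂ : -‖a‖ ≤ (φ a).re := by
      have := h₂.1; simp at this; linarith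
    have : φ a = ((φ a).re : ℂ) := Complex.ext rfl (by simp [him])
    rw [this, Complex.norm_real, Real.norm_eq_abs, abs_le]
    exact ⟨hre₂, hre₁⟩
  intro w
  set a : M := (1/2 : ℂ) • (w + star w) with ha_def
  set b : M := (Complex.I/2) • (star w - w) with hb_def
  have haSA : IsSelfAdjoint a := by
    rw [IsSelfAdjoint, ha_def, star_smul, star_add, star_star]
    rw [show star (1/2 : ℂ) = 1/2 by rw [star_div₀]; simp]
    rw [add_comm]
  have hbSA : IsSelfAdjoint b := by
    rw [IsSelfAdjoint, hb_def, star_smul, star_sub, star_star]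
    rw [show star (Complex.I/2 : ℂ) = -(Complex.I/2) by
      rw [star_div₀]; simp [neg_div]]
    rw [neg_smul, ← smul_neg, neg_sub]
  have hw : w = a + Complex.I • b := by
    rw [ha_def, hb_def, smul_smul,
      show Complex.I * (Complex.I/2) = -(1/2 : ℂ) by
        rw [mul_div_assoc', Complex.I_mul_I]; norm_num]
    module
  have hna : ‖a‖ ≤ ‖w‖ := by
    rw [ha_def]
    calc ‖(1/2 : ℂ) • (w + star w)‖ = ‖(1/2:ℂ)‖ * ‖w + star w‖ := norm_smul _ _
    _ ≤ (1/2) * (‖w‖ + ‖star w‖) := by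
        gcongr
        · simp
        · exact norm_add_le _ _
    _ = ‖w‖ := by rw [norm_star]; ring
  have hnb : ‖b‖ ≤ ‖w‖ := by
    rw [hb_def]
    calc ‖(Complex.I/2 : ℂ) • (star w - w)‖ = ‖(Complex.I/2:ℂ)‖ * ‖star w - w‖ := norm_smul _ _
    _ ≤ (1/2) * (‖star w‖ + ‖w‖) := by
        gcongr
        · simp [norm_div]
        · exact norm_sub_le _ _
    _ = ‖w‖ := by rw [norm_star]; ring
  have hφw : φ w = φ a + Complex.I * φ b := by
    conv_lhs => rw [hw]
    rw [map_add, map_smul φ Complex.I b, smul_eq_mul]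
  calc ‖φ w‖ = ‖φ a + Complex.I * φ b‖ := by rw [hφw]
  _ ≤ ‖φ a‖ + ‖Complex.I * φ b‖ := norm_add_le _ _
  _ = ‖φ a‖ + ‖φ b‖ := by rw [norm_mul, Complex.norm_I, one_mul]
  _ ≤ ‖w‖ + ‖w‖ := add_le_add ((hsa a haSA).trans hna) ((hsa b hbSA).trans hnb)
  _ = 2 * ‖w‖ := by ring

/-- The key algebraic identity: for a unitary `v`,
`(xv - vx)(xv - vx)* = v ((x*v - vx*)*(x*v - vx*)) v*`. -/
lemma dd_star_eq (v x : M) (h1 : star v * v = 1) (h2 : v * star v = 1) :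
    (x * v - v * x) * star (x * v - v * x)
      = v * ((star (star x * v - v * star x) * (star x * v - v * star x)) * star v) := by
  have hv' : ∀ y : M, v * (star v * y) = y := fun y => by rw [← mul_assoc, h2, one_mul]
  have hv'' : ∀ y : M, star v * (v * y) = y := fun y => by rw [← mul_assoc, h1, one_mul]
  simp only [star_sub, star_mul, star_star, mul_sub, sub_mul, mul_assoc, hv', hv'', h1, h2,
    mul_one]

end

/-- Let `M` be a σ-finite von Neumann algebra with faithful normal state `φ`, `ω` a
nonprincipal ultrafilter on `ℕ`, and `(u_n)` a sequence of unitaries of `M` with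
`‖u_nφ − φu_n‖ → 0` and `‖xu_n − u_nx‖_φ → 0` for all `x ∈ M`.  Then `(u_n) ∈ 𝓜^ω(M)`,
the element `u = (u_n)^ω` is a unitary of `M^ω` lying in `M' ∩ (M^ω)^{φ^ω}`. -/
theorem stmt_19 {M : Type*} [NormedRing M] [StarRing M] [CStarRing M] [CompleteSpace M]
    [NormedAlgebra ℂ M] [StarModule ℂ M]
    (φ : M →ₗ[ℂ] ℂ) (hφ1 : φ 1 = 1)
    (hφpos : ∀ x : M, 0 ≤ (φ (star x * x)).re ∧ (φ (star x * x)).im = 0)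
    (hφfaithful : ∀ x : M, φ (star x * x) = 0 → x = 0)
    (ω : Ultrafilter ℕ) (hω : ∀ n : ℕ, (ω : Filter ℕ) ≠ pure n)
    (u : ℕ → M) (hu : ∀ n, u n ∈ unitary M)
    -- (i)  `‖u_n φ − φ u_n‖ → 0`
    (h1 : Tendsto (fun n => ⨆ x : {x : M // ‖x‖ ≤ 1}, ‖φ ((x : M) * u n) - φ (u n * (x : M))‖)
      atTop (nhds 0))
    -- (ii)  `‖x u_n − u_n x‖_φ → 0` for all `x ∈ M`
    (h2 : ∀ x : M, Tendsto (fun n => phiNorm φ (x * u n - u n * x)) atTop (nhds 0)) :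
    -- `(u_n)` is a multiplier sequence
    InMω φ ω u ∧
    -- `u = (u_n)^ω ∈ M' ∩ M^ω`
    (∀ x : M, InIω φ ω (fun n => x * u n - u n * x)) ∧
    -- `u` lies in the centralizer `(M^ω)^{φ^ω}`
    (∀ y : ℕ → M, InMω φ ω y →
      Tendsto (fun n => φ (u n * y n) - φ (y n * u n)) (ω : Filter ℕ) (nhds 0)) ∧
    -- `u` is a unitary of `M^ω`
    (∀ n, star (u n) * u n = 1 ∧ u n * star (u n) = 1) := by
  have hu1 : ∀ n, star (u n) * u n = 1 := fun n => (Unitary.mem_iff.mp (hu n)).1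
  have hu2 : ∀ n, u n * star (u n) = 1 := fun n => (Unitary.mem_iff.mp (hu n)).2
  have huL : ∀ (n : ℕ) (z : M), u n * (star (u n) * z) = z := fun n z => by
    rw [← mul_assoc, hu2 n, one_mul]
  have huR : ∀ (n : ℕ) (z : M), star (u n) * (u n * z) = z := fun n z => by
    rw [← mul_assoc, hu1 n, one_mul]
  have hφb := phi_bound φ hφ1 hφpos
  set cu : ℝ := Real.sqrt ‖(1:M)‖ with hcu_def
  have hcu : ∀ n, ‖u n‖ = cu := by
    intro n
    have h : ‖u n‖ * ‖u n‖ = ‖(1:M)‖ := by rw [← CStarRing.norm_star_mul_self, hu1]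
    rw [hcu_def, ← h, Real.sqrt_mul_self (norm_nonneg _)]
  have hcu0 : 0 ≤ cu := Real.sqrt_nonneg _
  have hωle : (ω : Filter ℕ) ≤ atTop := by
    rcases ω.le_cofinite_or_eq_pure with h | ⟨a, ha⟩
    · rwa [Nat.cofinite_eq_atTop] at h
    · exact absurd (by rw [ha]; rfl) (hω a)
  set S : ℕ → ℝ :=
    fun n => ⨆ x : {x : M // ‖x‖ ≤ 1}, ‖φ ((x : M) * u n) - φ (u n * (x : M))‖ with hS_def
  have hbddS : ∀ n, BddAbove (Set.range
      fun x : {x : M // ‖x‖ ≤ 1} => ‖φ ((x:M) * u n) - φ (u n * (x:M))‖) := by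
    intro n
    refine ⟨4 * ‖u n‖, ?_⟩
    rintro _ ⟨x, rfl⟩
    calc ‖φ (↑x * u n) - φ (u n * ↑x)‖ ≤ ‖φ ((x:M) * u n)‖ + ‖φ (u n * (x:M))‖ :=
          norm_sub_le _ _
    _ ≤ 2 * ‖(x:M) * u n‖ + 2 * ‖u n * (x:M)‖ := add_le_add (hφb _) (hφb _)
    _ ≤ 2 * (‖(x:M)‖ * ‖u n‖) + 2 * (‖u n‖ * ‖(x:M)‖) := by
        gcongr
        · exact norm_mul_le _ _
        · exact norm_mul_le _ _
    _ ≤ 2 * (1 * ‖u n‖) + 2 * (‖u n‖ * 1) := by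
        gcongr
        · exact x.2
        · exact x.2
    _ = 4 * ‖u n‖ := by ring
  have hkey : ∀ (n : ℕ) (w : M), ‖φ (w * u n) - φ (u n * w)‖ ≤ S n * ‖w‖ := by
    intro n w
    rcases eq_or_ne w 0 with rfl | hw
    · simp
    · have hwn : (0:ℝ) < ‖w‖ := norm_pos_iff.mpr hw
      have hnc : ‖((‖w‖⁻¹ : ℝ) : ℂ)‖ = ‖w‖⁻¹ := by
        rw [Complex.norm_real, Real.norm_eq_abs, abs_of_nonneg (inv_nonneg.mpr hwn.le)]
      have hx : ‖((‖w‖⁻¹ : ℝ) : ℂ) • w‖ ≤ 1 := by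
        rw [norm_smul, hnc, inv_mul_cancel₀ hwn.ne']
      have hval := le_ciSup (hbddS n) (⟨_, hx⟩ : {x : M // ‖x‖ ≤ 1})
      simp only at hval
      rw [smul_mul_assoc, mul_smul_comm, map_smul, map_smul, ← smul_sub, norm_smul, hnc] at hval
      calc ‖φ (w * u n) - φ (u n * w)‖
          = (‖w‖⁻¹ * ‖φ (w * u n) - φ (u n * w)‖) * ‖w‖ := by field_simp
      _ ≤ S n * ‖w‖ := mul_le_mul_of_nonneg_right hval (norm_nonneg w)
  have hS0 : ∀ n, 0 ≤ S n := by
    intro n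
    have := le_ciSup (hbddS n) (⟨0, by simp⟩ : {x : M // ‖x‖ ≤ 1})
    simpa using this
  have hS : Tendsto S (ω : Filter ℕ) (nhds 0) := h1.mono_left hωle
  -- `u` almost commutes with `φ`, quantitatively along bounded sequences
  have hcomm : ∀ (w : ℕ → M) (K : ℝ), (∀ n, ‖w n‖ ≤ K) →
      Tendsto (fun n => φ (w n * u n) - φ (u n * w n)) (ω : Filter ℕ) (nhds 0) := by
    intro w K hK
    have hb : ∀ n, ‖φ (w n * u n) - φ (u n * w n)‖ ≤ S n * K :=
      fun n => (hkey n (w n)).trans (mul_le_mul_of_nonneg_left (hK n) (hS0 n))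
    have hg : Tendsto (fun n => S n * K) (ω : Filter ℕ) (nhds 0) := by
      simpa using hS.mul_const K
    exact squeeze_zero_norm hb hg
  -- similarly for `u*`
  have hcommₛ : ∀ (w : ℕ → M) (K : ℝ), (∀ n, ‖w n‖ ≤ K) →
      Tendsto (fun n => φ (star (u n) * w n) - φ (w n * star (u n)))
        (ω : Filter ℕ) (nhds 0) := by
    intro w K hK
    have hvK : ∀ n, ‖star (u n) * w n * star (u n)‖ ≤ cu * K * cu := by
      intro n
      calc ‖star (u n) * w n * star (u n)‖ ≤ ‖star (u n) * w n‖ * ‖star (u n)‖ :=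
            norm_mul_le _ _
      _ ≤ ‖star (u n)‖ * ‖w n‖ * ‖star (u n)‖ := by
          gcongr; exact norm_mul_le _ _
      _ ≤ cu * K * cu := by
          rw [norm_star, hcu n]
          gcongr
          exact hK n
    have := hcomm (fun n => star (u n) * w n * star (u n)) (cu * K * cu) hvK
    refine this.congr fun n => ?_
    congr 1
    · congr 1
      rw [mul_assoc, hu1 n, mul_one]
    · congr 1
      rw [← mul_assoc, ← mul_assoc, hu2 n, one_mul]
  -- passing from the real part to the complex value
  have hofRe : ∀ (f : ℕ → M),
      Tendsto (fun n => (φ (star (f n) * f n)).re) (ω : Filter ℕ) (nhds 0) →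
      Tendsto (fun n => φ (star (f n) * f n)) (ω : Filter ℕ) (nhds 0) := by
    intro f hf
    have heq : ∀ n, φ (star (f n) * f n) = (((φ (star (f n) * f n)).re : ℝ) : ℂ) :=
      fun n => Complex.ext rfl (by simp [(hφpos (f n)).2])
    have h : Tendsto (fun n => (((φ (star (f n) * f n)).re : ℝ) : ℂ))
        (ω : Filter ℕ) (nhds 0) := by
      have := (Complex.continuous_ofReal.tendsto 0).comp hf
      simpa [Function.comp_def] using this
    exact h.congr fun n => (heq n).symm
  -- `φ(d_n* d_n) → 0` for commutators `d_n = x u_n - u_n x`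
  have hreφ : ∀ x : M,
      Tendsto (fun n => φ (star (x * u n - u n * x) * (x * u n - u n * x)))
        (ω : Filter ℕ) (nhds 0) := by
    intro x
    apply hofRe
    have h2' : Tendsto (fun n => phiNorm φ (x * u n - u n * x)) (ω : Filter ℕ) (nhds 0) :=
      (h2 x).mono_left hωle
    have hm := h2'.mul h2'
    rw [mul_zero] at hm
    refine hm.congr fun n => ?_
    rw [phiNorm, Real.mul_self_sqrt (hφpos _).1]
  -- Part (2): commutators lie in `𝓘_ω`
  have hpart2 : ∀ x : M, InIω φ ω (fun n => x * u n - u n * x) := by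
    intro x
    have hdb : ∀ n, ‖x * u n - u n * x‖ ≤ 2 * ‖x‖ * cu := by
      intro n
      calc ‖x * u n - u n * x‖ ≤ ‖x * u n‖ + ‖u n * x‖ := norm_sub_le _ _
      _ ≤ ‖x‖ * ‖u n‖ + ‖u n‖ * ‖x‖ := add_le_add (norm_mul_le _ _) (norm_mul_le _ _)
      _ = 2 * ‖x‖ * cu := by rw [hcu n]; ring
    refine ⟨⟨2 * ‖x‖ * cu, hdb⟩, hreφ x, ?_⟩
    set e : ℕ → M := fun n => star x * u n - u n * star x with he_def
    set q : ℕ → M := fun n => (star (e n) * e n) * star (u n) with hq_def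
    have heb : ∀ n, ‖e n‖ ≤ 2 * ‖x‖ * cu := by
      intro n
      calc ‖e n‖ ≤ ‖star x * u n‖ + ‖u n * star x‖ := norm_sub_le _ _
      _ ≤ ‖star x‖ * ‖u n‖ + ‖u n‖ * ‖star x‖ := add_le_add (norm_mul_le _ _) (norm_mul_le _ _)
      _ = 2 * ‖x‖ * cu := by rw [hcu n, norm_star]; ring
    have hxcu0 : (0:ℝ) ≤ 2 * ‖x‖ * cu :=
      mul_nonneg (mul_nonneg (by norm_num) (norm_nonneg x)) hcu0
    have hqb : ∀ n, ‖q n‖ ≤ (2 * ‖x‖ * cu) * (2 * ‖x‖ * cu) * cu := by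
      intro n
      calc ‖q n‖ ≤ ‖star (e n) * e n‖ * ‖star (u n)‖ := norm_mul_le _ _
      _ ≤ ‖star (e n)‖ * ‖e n‖ * ‖star (u n)‖ := by
          gcongr; exact norm_mul_le _ _
      _ ≤ (2 * ‖x‖ * cu) * (2 * ‖x‖ * cu) * cu := by
          rw [norm_star, norm_star, hcu n]
          exact mul_le_mul_of_nonneg_right
            (mul_le_mul (heb n) (heb n) (norm_nonneg _) hxcu0) hcu0
    have T1 : Tendsto (fun n => φ (u n * q n) - φ (q n * u n)) (ω : Filter ℕ) (nhds 0) := by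
      have hneg := (hcomm q _ hqb).neg
      rw [neg_zero] at hneg
      exact hneg.congr fun n => by ring
    have T2 : Tendsto (fun n => φ (star (e n) * e n)) (ω : Filter ℕ) (nhds 0) := hreφ (star x)
    have hid : ∀ n, φ ((x * u n - u n * x) * star (x * u n - u n * x))
        = (φ (u n * q n) - φ (q n * u n)) + φ (star (e n) * e n) := by
      intro n
      have e1 : (x * u n - u n * x) * star (x * u n - u n * x) = u n * q n :=
        dd_star_eq (u n) x (hu1 n) (hu2 n)
      have e2 : q n * u n = star (e n) * e n := by
        show ((star (e n) * e n) * star (u n)) * u n = star (e n) * e n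
        rw [mul_assoc, hu1 n, mul_one]
      rw [e1, e2]; ring
    have := T1.add T2
    rw [add_zero] at this
    exact this.congr fun n => (hid n).symm
  -- Part (1): `u ∈ 𝓜^ω`
  have hpart1 : InMω φ ω u := by
    refine ⟨⟨cu, fun n => (hcu n).le⟩, ?_⟩
    intro y hy
    obtain ⟨⟨K, hK⟩, hy1, hy2⟩ := hy
    have hK0 : (0:ℝ) ≤ K := le_trans (norm_nonneg _) (hK 0)
    constructor
    · -- `u y ∈ 𝓘_ω`
      refine ⟨⟨cu * K, fun n => ?_⟩, ?_, ?_⟩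
      · calc ‖u n * y n‖ ≤ ‖u n‖ * ‖y n‖ := norm_mul_le _ _
        _ ≤ cu * K := by rw [hcu n]; exact mul_le_mul_of_nonneg_left (hK n) hcu0
      · refine hy1.congr fun n => ?_
        congr 1
        rw [star_mul, mul_assoc, huR n (y n)]
      · set p : ℕ → M := fun n => (y n * star (y n)) * star (u n) with hp_def
        have hpb : ∀ n, ‖p n‖ ≤ K * K * cu := by
          intro n
          calc ‖p n‖ ≤ ‖y n * star (y n)‖ * ‖star (u n)‖ := norm_mul_le _ _
          _ ≤ ‖y n‖ * ‖star (y n)‖ * ‖star (u n)‖ := by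
              gcongr; exact norm_mul_le _ _
          _ ≤ K * K * cu := by
              rw [norm_star, norm_star, hcu n]
              exact mul_le_mul_of_nonneg_right
                (mul_le_mul (hK n) (hK n) (norm_nonneg _) hK0) hcu0
        have T1 : Tendsto (fun n => φ (u n * p n) - φ (p n * u n)) (ω : Filter ℕ) (nhds 0) := by
          have hneg := (hcomm p _ hpb).neg
          rw [neg_zero] at hneg
          exact hneg.congr fun n => by ring
        have hid : ∀ n, φ ((u n * y n) * star (u n * y n))
            = (φ (u n * p n) - φ (p n * u n)) + φ (y n * star (y n)) := by
          intro n
          have e1 : (u n * y n) * star (u n * y n) = u n * p n := by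
            rw [star_mul]
            show (u n * y n) * (star (y n) * star (u n))
              = u n * ((y n * star (y n)) * star (u n))
            simp only [mul_assoc]
          have e2 : p n * u n = y n * star (y n) := by
            show ((y n * star (y n)) * star (u n)) * u n = y n * star (y n)
            rw [mul_assoc, hu1 n, mul_one]
          rw [e1, e2]; ring
        have := T1.add hy2
        rw [add_zero] at this
        exact this.congr fun n => (hid n).symm
    · -- `y u ∈ 𝓘_ω`
      refine ⟨⟨K * cu, fun n => ?_⟩, ?_, ?_⟩
      · calc ‖y n * u n‖ ≤ ‖y n‖ * ‖u n‖ := norm_mul_le _ _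
        _ ≤ K * cu := by rw [hcu n]; exact mul_le_mul_of_nonneg_right (hK n) hcu0
      · set r : ℕ → M := fun n => (star (y n) * y n) * u n with hr_def
        have hrb : ∀ n, ‖r n‖ ≤ K * K * cu := by
          intro n
          calc ‖r n‖ ≤ ‖star (y n) * y n‖ * ‖u n‖ := norm_mul_le _ _
          _ ≤ ‖star (y n)‖ * ‖y n‖ * ‖u n‖ := by
              gcongr; exact norm_mul_le _ _
          _ ≤ K * K * cu := by
              rw [norm_star, hcu n]
              exact mul_le_mul_of_nonneg_right
                (mul_le_mul (hK n) (hK n) (norm_nonneg _) hK0) hcu0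
        have T1 := hcommₛ r _ hrb
        have hid : ∀ n, φ (star (y n * u n) * (y n * u n))
            = (φ (star (u n) * r n) - φ (r n * star (u n))) + φ (star (y n) * y n) := by
          intro n
          have e1 : star (y n * u n) * (y n * u n) = star (u n) * r n := by
            rw [star_mul]
            show (star (u n) * star (y n)) * (y n * u n)
              = star (u n) * ((star (y n) * y n) * u n)
            simp only [mul_assoc]
          have e2 : r n * star (u n) = star (y n) * y n := by
            show ((star (y n) * y n) * u n) * star (u n) = star (y n) * y n
            rw [mul_assoc, hu2 n, mul_one]
          rw [e1, e2]; ring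
        have := T1.add hy1
        rw [add_zero] at this
        exact this.congr fun n => (hid n).symm
      · refine hy2.congr fun n => ?_
        congr 1
        rw [star_mul, mul_assoc, huL n (star (y n))]
  -- Part (3): `u` commutes with `φ^ω`
  have hpart3 : ∀ y : ℕ → M, InMω φ ω y →
      Tendsto (fun n => φ (u n * y n) - φ (y n * u n)) (ω : Filter ℕ) (nhds 0) := by
    intro y hy
    obtain ⟨K, hK⟩ := hy.1
    have hneg := (hcomm y K hK).neg
    rw [neg_zero] at hneg
    exact hneg.congr fun n => by ring
  exact ⟨hpart1, hpart2, hpart3, fun n => ⟨hu1 n, hu2 n⟩⟩
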